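/- For the original GAN value function V(D) = E_{p*}[log D(x)] + E_{p_θ}[log(1 - D(x))], the optimal discriminator is D*(x) = p*(x)/(p*(x) + p_θ(x)), and V(D*) = 2·JSD(p* || p_θ) - log 4, where JSD is the Jensen–Shannon divergence. -/
import Mathlib


open MeasureTheory Real

lemma gan_key (a b d : ℝ) (ha : 0 < a) (hb : 0 < b) (hd0 : 0 < d) (hd1 : d < 1) :
    a * Real.log d + b * Real.log (1 - d)
      ≤ a * Real.log (a / (a + b)) + b * Real.log (b / (a + b)) := by
  have hs : 0 < a + b := by linarith
  have h1 : Real.log (d / (a / (a + b))) ≤ d / (a / (a + b)) - 1 :=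
    Real.log_le_sub_one_of_pos (by positivity)
  have h2 : Real.log ((1 - d) / (b / (a + b))) ≤ (1 - d) / (b / (a + b)) - 1 :=
    Real.log_le_sub_one_of_pos (by
      apply div_pos (by linarith) (by positivity))
  rw [Real.log_div (by positivity) (by positivity)] at h1
  rw [Real.log_div (by linarith) (by positivity)] at h2
  have e1 : d / (a / (a + b)) = d * (a + b) / a := by field_simp
  have e2 : (1 - d) / (b / (a + b)) = (1 - d) * (a + b) / b := by field_simp
  rw [e1] at h1; rw [e2] at h2
  have h1' : a * Real.log d - a * Real.log (a / (a + b)) ≤ d * (a + b) - a := by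
    have := mul_le_mul_of_nonneg_left h1 ha.le
    rw [mul_sub, mul_sub, mul_div_cancel₀ _ ha.ne'] at this
    linarith
  have h2' : b * Real.log (1 - d) - b * Real.log (b / (a + b)) ≤ (1 - d) * (a + b) - b := by
    have := mul_le_mul_of_nonneg_left h2 hb.le
    rw [mul_sub, mul_sub, mul_div_cancel₀ _ hb.ne'] at this
    linarith
  nlinarith

/-- GAN optimal discriminator: for `V(D) = E_{p*}[log D] + E_{p_θ}[log (1 - D)]`, the
maximizer over measurable `D : X → (0,1)` is `D*(x) = p*(x)/(p*(x)+p_θ(x))`, and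
`V(D*) = 2·JSD(p* ‖ p_θ) - log 4`, where
`JSD(p‖q) = (1/2) KL(p ‖ (p+q)/2) + (1/2) KL(q ‖ (p+q)/2)`. -/
theorem gan_optimal_discriminator {X : Type*} [MeasurableSpace X] (μ : Measure X)
    (ps pt : X → ℝ)
    (hps : ∀ x, 0 < ps x) (hpt : ∀ x, 0 < pt x)
    (hps1 : ∫ x, ps x ∂μ = 1) (hpt1 : ∫ x, pt x ∂μ = 1)
    (Dstar : X → ℝ) (hDstar : ∀ x, Dstar x = ps x / (ps x + pt x))
    (hint1 : Integrable (fun x => ps x * Real.log (Dstar x)) μ)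
    (hint2 : Integrable (fun x => pt x * Real.log (1 - Dstar x)) μ) :
    (∀ D : X → ℝ, Measurable D → (∀ x, D x ∈ Set.Ioo (0 : ℝ) 1) →
      Integrable (fun x => ps x * Real.log (D x)) μ →
      Integrable (fun x => pt x * Real.log (1 - D x)) μ →
      (∫ x, ps x * Real.log (D x) ∂μ) + (∫ x, pt x * Real.log (1 - D x) ∂μ)
        ≤ (∫ x, ps x * Real.log (Dstar x) ∂μ) + ∫ x, pt x * Real.log (1 - Dstar x) ∂μ)
    ∧ (∫ x, ps x * Real.log (Dstar x) ∂μ) + (∫ x, pt x * Real.log (1 - Dstar x) ∂μ)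
        = 2 * ((1/2) * (∫ x, ps x * Real.log (ps x / ((ps x + pt x) / 2)) ∂μ)
             + (1/2) * (∫ x, pt x * Real.log (pt x / ((ps x + pt x) / 2)) ∂μ))
          - Real.log 4 := by
  have hs : ∀ x, 0 < ps x + pt x := fun x => by have := hps x; have := hpt x; linarith
  have h1mD : ∀ x, 1 - Dstar x = pt x / (ps x + pt x) := by
    intro x
    rw [hDstar x, eq_div_iff (hs x).ne', sub_mul, div_mul_cancel₀ _ (hs x).ne']
    ring
  constructor
  · intro D hD hDmem hDi1 hDi2
    rw [← integral_add hDi1 hDi2, ← integral_add hint1 hint2]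
    apply integral_mono (hDi1.add hDi2) (hint1.add hint2)
    intro x
    have hmem := hDmem x
    have key := gan_key (ps x) (pt x) (D x) (hps x) (hpt x) hmem.1 hmem.2
    show ps x * Real.log (D x) + pt x * Real.log (1 - D x)
      ≤ ps x * Real.log (Dstar x) + pt x * Real.log (1 - Dstar x)
    rw [h1mD x, hDstar x]
    exact key
  · have hpsi : Integrable ps μ := by
      by_contra h
      rw [integral_undef h] at hps1
      exact one_ne_zero hps1.symm
    have hpti : Integrable pt μ := by
      by_contra h
      rw [integral_undef h] at hpt1
      exact one_ne_zero hpt1.symm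
    have eA : ∀ x, ps x * Real.log (ps x / ((ps x + pt x) / 2))
        = ps x * Real.log (Dstar x) + ps x * Real.log 2 := by
      intro x
      rw [hDstar x, ← mul_add, ← Real.log_mul (div_pos (hps x) (hs x)).ne' two_ne_zero]
      congr 2
      field_simp
    have eB : ∀ x, pt x * Real.log (pt x / ((ps x + pt x) / 2))
        = pt x * Real.log (1 - Dstar x) + pt x * Real.log 2 := by
      intro x
      rw [h1mD x, ← mul_add, ← Real.log_mul (div_pos (hpt x) (hs x)).ne' two_ne_zero]
      congr 2
      field_simp
    have iA : ∫ x, ps x * Real.log (ps x / ((ps x + pt x) / 2)) ∂μ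
        = (∫ x, ps x * Real.log (Dstar x) ∂μ) + Real.log 2 := by
      simp_rw [eA]
      rw [integral_add hint1 (hpsi.mul_const _), integral_mul_const, hps1, one_mul]
    have iB : ∫ x, pt x * Real.log (pt x / ((ps x + pt x) / 2)) ∂μ
        = (∫ x, pt x * Real.log (1 - Dstar x) ∂μ) + Real.log 2 := by
      simp_rw [eB]
      rw [integral_add hint2 (hpti.mul_const _), integral_mul_const, hpt1, one_mul]
    have h4 : Real.log 4 = 2 * Real.log 2 := by
      rw [show (4:ℝ) = 2 ^ 2 by norm_num, Real.log_pow]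
      push_cast; ring
    rw [iA, iB, h4]
    ring
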